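/- Let d ≥ 1 and m ≥ 1 be integers and let C : [0,1]^d → ℝ satisfy the ℓ¹-Lipschitz property |C(u) − C(v)| ≤ Σ_{ℓ=1}^{d} |u_ℓ − v_ℓ| for all u, v ∈ [0,1]^d. Then sup_{u ∈ [0,1]^d} |B_m C(u) − C(u)| ≤ d/(2√m). -/

import Mathlib

/-!
Expanding `B_m C(u) - C(u)` against the product Bernstein weights, which form a probability
vector on the grid, and applying the Lipschitz bound reduces the bias to
`∑_ℓ E|K_ℓ/m - u_ℓ|` with `K_ℓ ~ Bin(m, u_ℓ)`. By Cauchy–Schwarz each term is at most the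
standard deviation `√(u_ℓ(1-u_ℓ)/m) ≤ 1/(2√m)`.
-/

/-- The Bernstein basis polynomial `P_{k,m}(u) = C(m,k) u^k (1-u)^(m-k)`. -/
noncomputable def bernsteinBasis (m k : ℕ) (u : ℝ) : ℝ :=
  (m.choose k : ℝ) * u ^ k * (1 - u) ^ (m - k)

/-- The multivariate Bernstein polynomial of order `m` of `f : [0,1]^d → ℝ`. -/
noncomputable def bernsteinB (d m : ℕ) (f : (Fin d → ℝ) → ℝ) (u : Fin d → ℝ) : ℝ :=
  ∑ k : Fin d → Fin (m + 1),
    f (fun ℓ => ((k ℓ : ℕ) : ℝ) / m) * ∏ ℓ, bernsteinBasis m (k ℓ) (u ℓ)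

open Finset

section WeightedSums

variable {κ : Type*} [Fintype κ] {p : κ → ℝ}

theorem abs_sum_mul_sub_le_sum_abs_sub_mul (hp : ∀ k, 0 ≤ p k) (hp1 : ∑ k, p k = 1)
    (f : κ → ℝ) (c : ℝ) : |∑ k, f k * p k - c| ≤ ∑ k, |f k - c| * p k := by
  have hc : ∑ k, f k * p k - c = ∑ k, (f k - c) * p k := by
    simp only [sub_mul, sum_sub_distrib, ← mul_sum, hp1, mul_one]
  rw [hc]
  refine (abs_sum_le_sum_abs _ _).trans_eq (sum_congr rfl fun k _ => ?_)
  rw [abs_mul, abs_of_nonneg (hp k)]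

theorem sum_abs_mul_le_sqrt_sum_sq_mul (hp : ∀ k, 0 ≤ p k) (hp1 : ∑ k, p k = 1) (x : κ → ℝ) :
    ∑ k, |x k| * p k ≤ √(∑ k, x k ^ 2 * p k) := by
  refine Real.le_sqrt_of_sq_le ?_
  have hCS := sum_sq_le_sum_mul_sum_of_sq_le_mul univ (r := fun k => |x k| * p k)
    (fun k _ => mul_nonneg (sq_nonneg (x k)) (hp k)) (fun k _ => hp k)
    (fun k _ => (by rw [mul_pow, sq_abs]; ring : _ = _).le)
  rwa [hp1, mul_one] at hCS

end WeightedSums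

section ProductWeights

variable {ι α : Type*} [Fintype ι] [DecidableEq ι] [Fintype α] {w : ι → α → ℝ}

theorem sum_prod_eq_one_of_sum_eq_one (hw : ∀ i, ∑ a, w i a = 1) :
    ∑ k : ι → α, ∏ i, w i (k i) = 1 := by
  rw [← Fintype.prod_sum]
  exact prod_eq_one fun i _ => hw i

theorem sum_apply_mul_prod_eq (hw : ∀ i, ∑ a, w i a = 1) (i : ι) (g : α → ℝ) :
    ∑ k : ι → α, g (k i) * ∏ j, w j (k j) = ∑ a, g a * w i a := by
  let v : ι → α → ℝ := fun j a => (if j = i then g a else 1) * w j a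
  have hprod (k : ι → α) : g (k i) * ∏ j, w j (k j) = ∏ j, v j (k j) := by
    simp only [v, prod_mul_distrib, Fintype.prod_ite_eq']
  have hsum (j : ι) : ∑ a, v j a = if j = i then ∑ a, g a * w i a else 1 := by
    split_ifs with hj
    · subst hj; simp [v]
    · simp [v, hj, hw j]
  simp only [hprod, ← Fintype.prod_sum, hsum, Fintype.prod_ite_eq']

end ProductWeights

section BernsteinBasis

theorem bernsteinBasis_eq_bernstein (m k : ℕ) (x : unitInterval) :
    bernsteinBasis m k x = bernstein m k x := by
  simp [bernsteinBasis, bernstein_apply]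

variable {u : ℝ}

theorem bernsteinBasis_nonneg (m k : ℕ) (hu : u ∈ Set.Icc (0 : ℝ) 1) :
    0 ≤ bernsteinBasis m k u := by
  have : 0 ≤ 1 - u := sub_nonneg.2 hu.2
  have := hu.1
  unfold bernsteinBasis
  positivity

theorem sum_bernsteinBasis (m : ℕ) (hu : u ∈ Set.Icc (0 : ℝ) 1) :
    ∑ k : Fin (m + 1), bernsteinBasis m k u = 1 := by
  simpa only [← bernsteinBasis_eq_bernstein] using bernstein.probability m ⟨u, hu⟩

theorem sum_sq_sub_mul_bernsteinBasis {m : ℕ} (hm : m ≠ 0) (hu : u ∈ Set.Icc (0 : ℝ) 1) :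
    ∑ k : Fin (m + 1), (((k : ℕ) : ℝ) / m - u) ^ 2 * bernsteinBasis m k u = u * (1 - u) / m := by
  rw [← bernstein.variance hm ⟨u, hu⟩]
  refine sum_congr rfl fun k _ => ?_
  rw [← bernsteinBasis_eq_bernstein, ← neg_sub, neg_sq]
  rfl

theorem sum_abs_sub_mul_bernsteinBasis_le {m : ℕ} (hm : 1 ≤ m) (hu : u ∈ Set.Icc (0 : ℝ) 1) :
    ∑ k : Fin (m + 1), |((k : ℕ) : ℝ) / m - u| * bernsteinBasis m k u ≤ 1 / (2 * √m) := by
  have hm0 : (0 : ℝ) < m := by exact_mod_cast hm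
  calc _ ≤ √(u * (1 - u) / m) := by
        rw [← sum_sq_sub_mul_bernsteinBasis (by omega) hu]
        exact sum_abs_mul_le_sqrt_sum_sq_mul (fun k : Fin (m + 1) => bernsteinBasis_nonneg m k hu)
          (sum_bernsteinBasis m hu) _
    _ ≤ √(1 / (4 * m)) := by
        refine Real.sqrt_le_sqrt ?_
        rw [div_le_div_iff₀ hm0 (by positivity)]
        nlinarith [sq_nonneg (2 * u - 1)]
    _ = 1 / (2 * √m) := by
        rw [Real.sqrt_div' _ (by positivity), Real.sqrt_mul' _ hm0.le, Real.sqrt_one,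
          show (4 : ℝ) = 2 ^ 2 by norm_num, Real.sqrt_sq zero_le_two]

end BernsteinBasis

theorem bernstein_bias_le_of_l1_lipschitz_general (d m : ℕ) (hm : 1 ≤ m)
    (C : (Fin d → ℝ) → ℝ)
    (hLip : ∀ u v : Fin d → ℝ, (∀ ℓ, u ℓ ∈ Set.Icc (0 : ℝ) 1) →
      (∀ ℓ, v ℓ ∈ Set.Icc (0 : ℝ) 1) → |C u - C v| ≤ ∑ ℓ, |u ℓ - v ℓ|) :
    ∀ u : Fin d → ℝ, (∀ ℓ, u ℓ ∈ Set.Icc (0 : ℝ) 1) →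
      |bernsteinB d m C u - C u| ≤ (d : ℝ) / (2 * Real.sqrt m) := by
  intro u hu
  set W : (Fin d → Fin (m + 1)) → ℝ := fun k => ∏ ℓ, bernsteinBasis m (k ℓ) (u ℓ)
  have hW : ∀ k, 0 ≤ W k := fun k => prod_nonneg fun ℓ _ => bernsteinBasis_nonneg m _ (hu ℓ)
  have hW1 : ∑ k, W k = 1 := sum_prod_eq_one_of_sum_eq_one fun ℓ => sum_bernsteinBasis m (hu ℓ)
  have hgrid (k : Fin d → Fin (m + 1)) (ℓ : Fin d) : ((k ℓ : ℕ) : ℝ) / m ∈ Set.Icc (0 : ℝ) 1 :=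
    ⟨by positivity, div_le_one_of_le₀ (by exact_mod_cast (k ℓ).is_le) (Nat.cast_nonneg m)⟩
  calc |bernsteinB d m C u - C u|
      ≤ ∑ k, |C (fun ℓ => ((k ℓ : ℕ) : ℝ) / m) - C u| * W k :=
        abs_sum_mul_sub_le_sum_abs_sub_mul hW hW1 _ _
    _ ≤ ∑ k, (∑ ℓ, |((k ℓ : ℕ) : ℝ) / m - u ℓ|) * W k :=
        sum_le_sum fun k _ => mul_le_mul_of_nonneg_right (hLip _ _ (hgrid k) hu) (hW k)
    _ = ∑ ℓ, ∑ j : Fin (m + 1), |((j : ℕ) : ℝ) / m - u ℓ| * bernsteinBasis m j (u ℓ) := by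
        simp only [sum_mul]
        rw [sum_comm]
        exact sum_congr rfl fun ℓ _ => sum_apply_mul_prod_eq
          (fun ℓ => sum_bernsteinBasis m (hu ℓ)) ℓ fun j => |((j : ℕ) : ℝ) / m - u ℓ|
    _ ≤ ∑ _ℓ : Fin d, 1 / (2 * √m) :=
        sum_le_sum fun ℓ _ => sum_abs_sub_mul_bernsteinBasis_le hm (hu ℓ)
    _ = (d : ℝ) / (2 * √m) := by simp [div_eq_mul_inv]

/-- if `C : [0,1]^d → ℝ` satisfies the ℓ¹-Lipschitz property
`|C(u) − C(v)| ≤ Σ_ℓ |u_ℓ − v_ℓ|`, then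
`sup_{u ∈ [0,1]^d} |B_m C(u) − C(u)| ≤ d/(2√m)`. -/
theorem bernstein_bias_le_of_l1_lipschitz (d m : ℕ) (hd : 1 ≤ d) (hm : 1 ≤ m)
    (C : (Fin d → ℝ) → ℝ)
    (hLip : ∀ u v : Fin d → ℝ, (∀ ℓ, u ℓ ∈ Set.Icc (0 : ℝ) 1) →
      (∀ ℓ, v ℓ ∈ Set.Icc (0 : ℝ) 1) → |C u - C v| ≤ ∑ ℓ, |u ℓ - v ℓ|) :
    ∀ u : Fin d → ℝ, (∀ ℓ, u ℓ ∈ Set.Icc (0 : ℝ) 1) →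
      |bernsteinB d m C u - C u| ≤ (d : ℝ) / (2 * Real.sqrt m) :=
  bernstein_bias_le_of_l1_lipschitz_general d m hm C hLip
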